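/- arXiv:1506.08969 — 2 statements merged into one kernel-verified Lean document; each statement's English description precedes it below -/
import Mathlib

section
/- Let G be a group with a Hausdorff group topology τ of weight κ (κ infinite). Then G admits a Hausdorff linear group topology of weight at most κ^ω; equivalently, w_l(G) ≤ w_g(G)^ω, where w_g(G) is the minimal weight of a Hausdorff group topology on G and w_l(G) is the minimal weight of a Hausdorff linear group topology on G. -/
open Cardinal TopologicalSpace

universe u

/-- The weight of a topology: the smallest cardinality of a (topological) base. -/
noncomputable def topWeight {X : Type u} (t : TopologicalSpace X) : Cardinal.{u} :=
  sInf {c | ∃ B : Set (Set X), @TopologicalSpace.IsTopologicalBasis X t B ∧ #B = c}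

/-- A topology on a group is a linear group topology if it is a group topology having
a neighbourhood base at the identity consisting of open subgroups. -/
def IsLinearGroupTopology {G : Type u} [Group G] (t : TopologicalSpace G) : Prop :=
  @IsTopologicalGroup G t _ ∧
    ∀ U ∈ @nhds G t 1, ∃ H : Subgroup G, @IsOpen G t (H : Set G) ∧ (H : Set G) ⊆ U

/-- The minimal weight of a Hausdorff linear group topology on `G`. -/
noncomputable def wl (G : Type u) [Group G] : Cardinal.{u} :=
  sInf {c | ∃ t : TopologicalSpace G, IsLinearGroupTopology t ∧ @T2Space G t ∧ topWeight t = c}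

/-- The minimal weight of a Hausdorff group topology on `G`. -/
noncomputable def wg (G : Type u) [Group G] : Cardinal.{u} :=
  sInf {c | ∃ t : TopologicalSpace G, @IsTopologicalGroup G t _ ∧ @T2Space G t ∧ topWeight t = c}

/-!
If neighbourhoods `u n` of `1` satisfy `u (n + 1) / u (n + 1) ⊆ u n`, then `⋂ n, u n` is a
subgroup, and any countable family of neighbourhoods of `1` contains termwise such a chain made of
members of a fixed base `B`. The subgroups coming from chains in `B` thus form a conjugation-stable
filter basis of subgroups, separating points because the original topology is T₁; it generates a
Hausdorff linear group topology whose base is the cosets of these subgroups. There are at most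
`#B ^ ℵ₀` chains in `B`, and each of their subgroups has index at most `#B ^ ℵ₀`, since `x` is
determined modulo `⋂ n, u n` by a choice, for every `n`, of a basic set between `x` and `x • u n`.
-/

open Set Filter Pointwise Topology

theorem topWeight_le_mk {X : Type u} [t : TopologicalSpace X] {B : Set (Set X)}
    (hB : IsTopologicalBasis B) : topWeight t ≤ #B :=
  csInf_le' ⟨B, hB, rfl⟩

theorem exists_isTopologicalBasis_mk_eq_topWeight {X : Type u} [t : TopologicalSpace X] :
    ∃ B : Set (Set X), IsTopologicalBasis B ∧ #B = topWeight t :=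
  csInf_mem (s := {c | ∃ B : Set (Set X), IsTopologicalBasis B ∧ #B = c})
    ⟨_, _, isTopologicalBasis_opens, rfl⟩

section Group

variable {G : Type u} [Group G]

theorem mk_range_smul_coe_le (H : Subgroup G) :
    #(range fun x : G => x • (H : Set G)) ≤ #(G ⧸ H) := by
  refine mk_le_of_surjective (f := fun q : G ⧸ H => ⟨q.out • (H : Set G), q.out, rfl⟩) ?_
  rintro ⟨_, x, rfl⟩
  refine ⟨x, Subtype.ext ((leftCoset_eq_iff H).2 ?_)⟩
  exact QuotientGroup.eq.1 (QuotientGroup.out_eq' (x : G ⧸ H))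

def IsDivChain (u : ℕ → Set G) : Prop :=
  ∀ n, (1 : G) ∈ u n ∧ u (n + 1) / u (n + 1) ⊆ u n

def IsDivChain.subgroup {u : ℕ → Set G} (hu : IsDivChain u) : Subgroup G :=
  Subgroup.ofDiv (⋂ n, u n) ⟨1, mem_iInter.2 fun n => (hu n).1⟩ fun x hx y hy =>
    mem_iInter.2 fun n => (hu n).2 <| by
      simpa only [div_eq_mul_inv] using
        div_mem_div (mem_iInter.1 hx (n + 1)) (mem_iInter.1 hy (n + 1))

def divChainSubgroups (B : Set (Set G)) : Set (Set G) :=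
  {s | ∃ u : ℕ → Set G, (∀ n, u n ∈ B) ∧ ∃ hu : IsDivChain u, s = hu.subgroup}

theorem divChainSubgroups_subset_range_coe (B : Set (Set G)) :
    divChainSubgroups B ⊆ range ((↑) : Subgroup G → Set G) := by
  rintro _ ⟨u, -, hu, rfl⟩
  exact ⟨hu.subgroup, rfl⟩

theorem mk_divChainSubgroups_le (B : Set (Set G)) : #(divChainSubgroups B) ≤ #B ^ ℵ₀ := by
  have hsub : divChainSubgroups B ⊆ range fun u : ℕ → B => ⋂ n, (u n : Set G) := by
    rintro _ ⟨u, huB, hu, rfl⟩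
    exact ⟨fun n => ⟨u n, huB n⟩, rfl⟩
  calc #(divChainSubgroups B) ≤ #(ℕ → B) := (mk_le_mk_of_subset hsub).trans mk_range_le
    _ = #B ^ ℵ₀ := by simp

end Group

section TopologicalGroup

variable {G : Type u} [Group G] [TopologicalSpace G] [IsTopologicalGroup G]

theorem isTopologicalBasis_smul_of_hasBasis {S : Set (Set G)}
    (hS : (𝓝 (1 : G)).HasBasis (· ∈ S) id) (hSo : ∀ s ∈ S, IsOpen s) :
    IsTopologicalBasis (⋃ s ∈ S, range fun x : G => x • s) := by
  refine isTopologicalBasis_of_isOpen_of_nhds ?_ fun a U haU hU => ?_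
  · simp only [mem_iUnion, mem_range]
    rintro _ ⟨s, hs, x, rfl⟩
    exact (hSo s hs).smul x
  · have hUa : (a * ·) ⁻¹' U ∈ 𝓝 1 := by
      rw [← mem_map, map_mul_left_nhds_one]
      exact hU.mem_nhds haU
    obtain ⟨s, hs, hsU⟩ := hS.mem_iff.1 hUa
    refine ⟨a • s, mem_biUnion hs ⟨a, rfl⟩, ?_, ?_⟩
    · simpa using smul_mem_smul_set (a := a) (mem_of_mem_nhds (hS.mem_of_mem hs))
    · rintro _ ⟨x, hx, rfl⟩
      exact hsU hx

theorem mk_quotient_le_of_iInter_subset {B : Set (Set G)} (hB : IsTopologicalBasis B)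
    {H : Subgroup G} {u : ℕ → Set G} (hu : ∀ n, u n ∈ 𝓝 1) (hH : ⋂ n, u n ⊆ H) :
    #(G ⧸ H) ≤ #B ^ ℵ₀ := by
  have hnhds : ∀ x n, x • u n ∈ 𝓝 x := fun x n => by
    simpa using (smul_mem_nhds_smul_iff x).2 (hu n)
  choose v hvB hxv hvsub using fun x n => hB.mem_nhds_iff.1 (hnhds x n)
  -- `x` is determined modulo `H` by the basic sets `v x n` lying between `x` and `x • u n`.
  have hv : ∀ x y, v x = v y → x⁻¹ * y ∈ H := fun x y hxy =>
    hH <| mem_iInter.2 fun n => (mem_leftCoset_iff x).1 (hvsub x n (hxy ▸ hxv y n))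
  calc #(G ⧸ H) ≤ #(ℕ → B) := by
        refine mk_le_of_injective (f := fun q : G ⧸ H => fun n => (⟨v q.out n, hvB _ n⟩ : B))
          fun q q' hqq' => ?_
        rw [← q.out_eq', ← q'.out_eq']
        refine QuotientGroup.eq.2 (hv _ _ (funext fun n => ?_))
        exact congrArg Subtype.val (congrFun hqq' n)
    _ = #B ^ ℵ₀ := by simp

end TopologicalGroup

namespace GroupFilterBasis

variable {G : Type u} [Group G] (F : GroupFilterBasis G)

theorem isLinearGroupTopology_topology (hF : F.sets ⊆ range ((↑) : Subgroup G → Set G)) :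
    IsLinearGroupTopology F.topology := by
  let := F.topology
  refine ⟨F.isTopologicalGroup, fun U hU => ?_⟩
  obtain ⟨s, hs, hsU⟩ := F.nhds_one_hasBasis.mem_iff.1 hU
  obtain ⟨H, rfl⟩ := hF hs
  exact ⟨H, H.isOpen_of_mem_nhds (F.mem_nhds_one hs), hsU⟩

theorem topWeight_topology_le (hF : F.sets ⊆ range ((↑) : Subgroup G → Set G)) :
    topWeight F.topology ≤ #F.sets * ⨆ s : F.sets, #(range fun x : G => x • (s : Set G)) := by
  let := F.topology
  have hopen : ∀ s ∈ F, IsOpen s := fun s hs => by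
    obtain ⟨H, rfl⟩ := hF hs
    exact H.isOpen_of_mem_nhds (F.mem_nhds_one hs)
  exact (topWeight_le_mk (isTopologicalBasis_smul_of_hasBasis F.nhds_one_hasBasis hopen)).trans
    (mk_biUnion_le _ _)

end GroupFilterBasis

section DivChainTopology

variable {G : Type u} [Group G] [TopologicalSpace G] {B : Set (Set G)}

theorem IsDivChain.mem_nhds (hB : IsTopologicalBasis B) {u : ℕ → Set G} (huB : ∀ n, u n ∈ B)
    (hu : IsDivChain u) (n : ℕ) : u n ∈ 𝓝 1 :=
  (hB.isOpen (huB n)).mem_nhds (hu n).1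

variable [IsTopologicalGroup G]

theorem exists_mem_basis_div_subset (hB : IsTopologicalBasis B) {W : Set G} (hW : W ∈ 𝓝 1) :
    ∃ s ∈ B, (1 : G) ∈ s ∧ s / s ⊆ W := by
  obtain ⟨V, hV, hVW⟩ := exists_nhds_split_inv hW
  obtain ⟨s, hsB, hs1, hsV⟩ := hB.mem_nhds_iff.1 hV
  exact ⟨s, hsB, hs1, div_subset_iff.2 fun a ha b hb => hVW a (hsV ha) b (hsV hb)⟩

theorem exists_isDivChain_subset (hB : IsTopologicalBasis B) {V : ℕ → Set G}
    (hV : ∀ n, V n ∈ 𝓝 1) :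
    ∃ u : ℕ → Set G, (∀ n, u n ∈ B) ∧ IsDivChain u ∧ ∀ n, u n ⊆ V n := by
  choose! next hnextB hnext1 hnext using
    fun W (hW : W ∈ 𝓝 (1 : G)) => exists_mem_basis_div_subset hB hW
  have hnext_subset : ∀ W ∈ 𝓝 (1 : G), next W ⊆ W := fun W hW a ha => by
    simpa using hnext W hW (div_mem_div ha (hnext1 W hW))
  let W : ℕ → Set G := fun n => Nat.rec (V 0) (fun n w => next w ∩ V (n + 1)) n
  have hW : ∀ n, W n ∈ 𝓝 1 := by
    intro n
    induction n with
    | zero => exact hV 0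
    | succ n ih =>
      exact inter_mem ((hB.isOpen (hnextB _ ih)).mem_nhds (hnext1 _ ih)) (hV (n + 1))
  refine ⟨fun n => next (W n), fun n => hnextB _ (hW n),
    fun n => ⟨hnext1 _ (hW n), (hnext _ (hW (n + 1))).trans inter_subset_left⟩, fun n => ?_⟩
  cases n with
  | zero => exact hnext_subset _ (hW 0)
  | succ n => exact (hnext_subset _ (hW (n + 1))).trans inter_subset_right

theorem exists_mem_divChainSubgroups_subset (hB : IsTopologicalBasis B) {V : ℕ → Set G}
    (hV : ∀ n, V n ∈ 𝓝 1) : ∃ s ∈ divChainSubgroups B, s ⊆ ⋂ n, V n := by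
  obtain ⟨u, huB, hu, huV⟩ := exists_isDivChain_subset hB hV
  exact ⟨_, ⟨u, huB, hu, rfl⟩, iInter_mono huV⟩

@[reducible]
def divChainFilterBasis (hB : IsTopologicalBasis B) : GroupFilterBasis G where
  sets := divChainSubgroups B
  nonempty := by
    obtain ⟨s, hs, -⟩ := exists_mem_divChainSubgroups_subset hB fun _ => univ_mem
    exact ⟨s, hs⟩
  inter_sets := by
    rintro _ _ ⟨u, huB, hu, rfl⟩ ⟨v, hvB, hv, rfl⟩
    obtain ⟨s, hs, hsub⟩ := exists_mem_divChainSubgroups_subset hB fun n =>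
      inter_mem (hu.mem_nhds hB huB n) (hv.mem_nhds hB hvB n)
    exact ⟨s, hs, hsub.trans (iInter_inter_distrib _ _).subset⟩
  one' := by
    rintro _ ⟨u, -, hu, rfl⟩
    exact hu.subgroup.one_mem
  mul' := by
    rintro _ ⟨u, huB, hu, rfl⟩
    exact ⟨_, ⟨u, huB, hu, rfl⟩, (coe_mul_coe _).subset⟩
  inv' := by
    rintro _ ⟨u, huB, hu, rfl⟩
    exact ⟨_, ⟨u, huB, hu, rfl⟩, fun x hx => hu.subgroup.inv_mem hx⟩
  conj' := by
    rintro g _ ⟨u, huB, hu, rfl⟩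
    have hconj : Tendsto (fun x => g * x * g⁻¹) (𝓝 1) (𝓝 1) :=
      ((continuous_const_mul g).mul_const g⁻¹).tendsto' 1 1 (by group)
    obtain ⟨s, hs, hsub⟩ := exists_mem_divChainSubgroups_subset hB fun n =>
      hconj (hu.mem_nhds hB huB n)
    exact ⟨s, hs, hsub.trans preimage_iInter.symm.subset⟩

theorem t2Space_divChainFilterBasis [T1Space G] (hB : IsTopologicalBasis B) :
    @T2Space G (divChainFilterBasis hB).topology := by
  refine ((divChainFilterBasis hB).t2Space_iff_sInter_subset (t := _) rfl).2 fun x hx => ?_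
  by_contra hx1
  obtain ⟨s, hs, hsx⟩ := exists_mem_divChainSubgroups_subset hB fun _ =>
    isOpen_compl_singleton.mem_nhds (Ne.symm hx1)
  exact mem_iInter.1 (hsx (hx s hs)) 0 rfl

theorem topWeight_divChainFilterBasis_le (hB : IsTopologicalBasis B) :
    topWeight (divChainFilterBasis hB).topology ≤ #B ^ ℵ₀ := by
  calc _ ≤ _ := (divChainFilterBasis hB).topWeight_topology_le
        (divChainSubgroups_subset_range_coe B)
    _ ≤ #B ^ ℵ₀ * #B ^ ℵ₀ := by
      refine mul_le_mul' (mk_divChainSubgroups_le B) (ciSup_le' ?_)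
      rintro ⟨_, u, huB, hu, rfl⟩
      exact (mk_range_smul_coe_le _).trans
        (mk_quotient_le_of_iInter_subset hB (hu.mem_nhds hB huB) subset_rfl)
    _ = #B ^ ℵ₀ := by rw [← power_add, aleph0_add_aleph0]

end DivChainTopology

theorem exists_isLinearGroupTopology_t2Space_topWeight_le {G : Type u} [Group G]
    [t : TopologicalSpace G] [IsTopologicalGroup G] [T1Space G] :
    ∃ t' : TopologicalSpace G, IsLinearGroupTopology t' ∧ @T2Space G t' ∧
      topWeight t' ≤ topWeight t ^ ℵ₀ := by
  obtain ⟨B, hB, hBw⟩ := exists_isTopologicalBasis_mk_eq_topWeight (X := G)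
  exact ⟨_, (divChainFilterBasis hB).isLinearGroupTopology_topology
    (divChainSubgroups_subset_range_coe B), t2Space_divChainFilterBasis hB,
    hBw ▸ topWeight_divChainFilterBasis_le hB⟩

theorem wl_le_wg_pow_omega_general (G : Type u) [Group G] (t : TopologicalSpace G)
    (htg : @IsTopologicalGroup G t _) (ht2 : @T2Space G t) (κ : Cardinal.{u})
    (hw : topWeight t = κ) :
    (∃ t' : TopologicalSpace G, IsLinearGroupTopology t' ∧ @T2Space G t' ∧
      topWeight t' ≤ κ ^ ℵ₀) ∧ wl G ≤ (wg G) ^ ℵ₀ := by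
  refine ⟨hw ▸ exists_isLinearGroupTopology_t2Space_topWeight_le (t := t), ?_⟩
  obtain ⟨t₀, htg₀, ht2₀, hw₀⟩ : wg G ∈ {c | ∃ t : TopologicalSpace G,
      @IsTopologicalGroup G t _ ∧ @T2Space G t ∧ topWeight t = c} :=
    csInf_mem ⟨_, t, htg, ht2, rfl⟩
  obtain ⟨t', hlin, ht2', hw'⟩ := exists_isLinearGroupTopology_t2Space_topWeight_le (t := t₀)
  calc wl G ≤ topWeight t' := csInf_le' ⟨t', hlin, ht2', rfl⟩
    _ ≤ wg G ^ ℵ₀ := hw₀ ▸ hw'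

/-- If an infinite group `G` carries a Hausdorff group topology of weight `κ` (`κ` infinite),
then `G` admits a Hausdorff linear group topology of weight at most `κ ^ ℵ₀`; equivalently,
`wl G ≤ (wg G) ^ ℵ₀`. -/
theorem wl_le_wg_pow_omega (G : Type u) [Group G] [Infinite G] (t : TopologicalSpace G)
    (htg : @IsTopologicalGroup G t _) (ht2 : @T2Space G t) (κ : Cardinal.{u})
    (hκ : ℵ₀ ≤ κ) (hw : topWeight t = κ) :
    (∃ t' : TopologicalSpace G, IsLinearGroupTopology t' ∧ @T2Space G t' ∧
      topWeight t' ≤ κ ^ ℵ₀) ∧ wl G ≤ (wg G) ^ ℵ₀ :=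
  wl_le_wg_pow_omega_general G t htg ht2 κ hw
end

section
/- Let κ be an infinite cardinal and G a group with Alt(κ) ⊆ G ⊆ Sym(κ). Then every Hausdorff shift-invariant topology τ on G has spread at least κ: there exist discrete subspaces of (G, τ) of cardinality arbitrarily close to κ (in fact sup of cardinalities of discrete subspaces equals κ). -/
open Equiv

universe u

/-- The alternating group on an arbitrary type `α`: the subgroup of `Equiv.Perm α`
generated by products of two transpositions. -/
def altGroup (α : Type*) [DecidableEq α] : Subgroup (Equiv.Perm α) :=
  Subgroup.closure {σ | ∃ τ₁ τ₂ : Equiv.Perm α, τ₁.IsSwap ∧ τ₂.IsSwap ∧ σ = τ₁ * τ₂}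

/-! Fix `p ≠ q`. The 3-cycles `(p q z)`, `z ∉ {p, q}`, lie in `Alt(α)` and are `#α` many. They form a
discrete subspace: conjugating `(p q z)` by a 3-cycle `(z x y)` on fresh points `x, y` moves it, so in
a Hausdorff topology with continuous shifts some neighbourhood of `(p q z)` contains no element
commuting with `(z x y)`, whereas `(p q w)` commutes with it for every `w ∉ {z, x, y}`. In a T₁ space
a point with a finite neighbourhood is isolated. -/

open Set Topology Function Cardinal

theorem SeparatelyContinuousMul.of_continuous_mul_mul {M : Type*} [Monoid M] [TopologicalSpace M]
    (h : ∀ a b : M, Continuous fun x => a * x * b) : SeparatelyContinuousMul M where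
  continuous_const_mul {a} := by simpa only [mul_one] using h a 1
  continuous_mul_const {a} := by simpa only [one_mul] using h 1 a

theorem discreteTopology_range_of_finite_preimage {ι X : Type*} [TopologicalSpace X] [T1Space X]
    {f : ι → X} (h : ∀ i, ∃ U ∈ 𝓝 (f i), (f ⁻¹' U).Finite) : DiscreteTopology (range f) := by
  refine discreteTopology_iff_isOpen_singleton.mpr ?_
  rintro ⟨-, i, rfl⟩
  obtain ⟨U, hU, hfin⟩ := h i
  refine isOpen_singleton_of_finite_mem_nhds _
    (continuous_subtype_val.continuousAt.preimage_mem_nhds hU) ?_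
  refine ((hfin.image f).preimage Subtype.val_injective.injOn).subset ?_
  rintro ⟨-, j, rfl⟩ hj
  exact ⟨j, hj, rfl⟩

namespace Equiv.Perm

variable {α : Type*} [DecidableEq α]

theorem swap_mul_swap_mem_altGroup {a b c d : α} (hab : a ≠ b) (hcd : c ≠ d) :
    swap a b * swap c d ∈ altGroup α :=
  Subgroup.subset_closure ⟨swap a b, swap c d, ⟨a, b, hab, rfl⟩, ⟨c, d, hcd, rfl⟩, rfl⟩

theorem swap_mul_swap_apply_of_notMem {a b c x : α} (hx : x ∉ ({a, b, c} : Set α)) :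
    (swap a b * swap b c) x = x := by
  simp only [mem_insert_iff, mem_singleton_iff, not_or] at hx
  rw [mul_apply, swap_apply_of_ne_of_ne hx.2.1 hx.2.2, swap_apply_of_ne_of_ne hx.1 hx.2.1]

theorem disjoint_swap_mul_swap {a b c a' b' c' : α}
    (h : _root_.Disjoint ({a, b, c} : Set α) {a', b', c'}) :
    (swap a b * swap b c).Disjoint (swap a' b' * swap b' c') := by
  intro x
  by_cases hx : x ∈ ({a, b, c} : Set α)
  · exact .inr (swap_mul_swap_apply_of_notMem (disjoint_left.mp h hx))
  · exact .inl (swap_mul_swap_apply_of_notMem hx)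

theorem not_commute_swap_mul_swap {g : Perm α} {a b c : α} (ha : g a ≠ a) (hc : g c = c) :
    ¬Commute (swap a b * swap b c) g := by
  intro h
  have h_c := congrArg (· c) h.eq
  simp only [mul_apply, hc, swap_apply_right] at h_c
  exact ha h_c.symm

end Equiv.Perm

theorem discreteTopology_range_swap_mul_swap {α : Type*} [DecidableEq α] [Infinite α]
    {G : Subgroup (Perm α)} [TopologicalSpace G] [T2Space G] [SeparatelyContinuousMul G]
    (hG : altGroup α ≤ G) {p q : α} {f : ({p, q}ᶜ : Set α) → G}
    (hf : ∀ z, (f z : Perm α) = swap p q * swap q z) : DiscreteTopology (range f) := by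
  refine discreteTopology_range_of_finite_preimage fun ⟨z, hz⟩ => ?_
  obtain ⟨hzp, hzq⟩ : z ≠ p ∧ z ≠ q := by simpa [not_or] using hz
  obtain ⟨x, hx⟩ := Infinite.exists_notMem_finset ({p, q, z} : Finset α)
  obtain ⟨y, hy⟩ := Infinite.exists_notMem_finset ({p, q, z, x} : Finset α)
  simp only [Finset.mem_insert, Finset.mem_singleton, not_or] at hx hy
  obtain ⟨hxp, hxq, hxz⟩ := hx
  obtain ⟨hyp, hyq, hyz, hyx⟩ := hy
  let A : G := ⟨swap z x * swap x y,
    hG (Perm.swap_mul_swap_mem_altGroup (Ne.symm hxz) (Ne.symm hyx))⟩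
  refine ⟨(centralizer {A})ᶜ, (isClosed_centralizer _).isOpen_compl.mem_nhds ?_, ?_⟩
  · simp only [mem_compl_iff, mem_centralizer_iff, mem_singleton_iff, forall_eq]
    intro h
    have h_comm : Commute (A : Perm α) (swap p q * swap q z) := by
      simpa [hf, A] using (show Commute A _ from h).map G.subtype
    refine Perm.not_commute_swap_mul_swap ?_ ?_ h_comm
    · simpa only [Perm.mul_apply, swap_apply_right] using hzp.symm
    · exact Perm.swap_mul_swap_apply_of_notMem (by simp [hyp, hyq, hyz])
  · refine ((toFinite {z, x, y}).preimage Subtype.val_injective.injOn).subset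
      fun ⟨w, hw⟩ hfw => ?_
    by_contra hwA
    simp only [mem_preimage, mem_insert_iff, mem_singleton_iff, not_or] at hwA
    have hw' : w ≠ p ∧ w ≠ q := by simpa [not_or] using hw
    have h_disj : Disjoint ({z, x, y} : Set α) {p, q, w} := by
      simp only [disjoint_insert_left, disjoint_singleton_left, mem_insert_iff, mem_singleton_iff]
      grind
    have h_comm : Commute (A : Perm α) (f ⟨w, hw⟩) := by
      rw [hf]
      exact (Perm.disjoint_swap_mul_swap h_disj).commute
    apply hfw
    simp only [mem_centralizer_iff, mem_singleton_iff, forall_eq]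
    exact Subtype.ext h_comm.eq

/-- For an infinite type `α` and a group `G` with `Alt(α) ⊆ G ⊆ Sym(α)`, every Hausdorff
shift-invariant topology on `G` has spread at least `#α`: for every cardinal `μ < #α` there
is a discrete subspace of cardinality greater than `μ`. -/
theorem spread_ge (α : Type u) [DecidableEq α] [Infinite α]
    (G : Subgroup (Equiv.Perm α)) (hG : altGroup α ≤ G)
    (t : TopologicalSpace G) (ht2 : @T2Space G t)
    (hshift : ∀ a b : G, @IsHomeomorph G G t t (fun x => a * x * b)) :
    ∀ μ : Cardinal.{u}, μ < Cardinal.mk α →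
      ∃ D : Set G, @DiscreteTopology D (TopologicalSpace.induced Subtype.val t) ∧
        μ < Cardinal.mk D := by
  intro μ hμ
  let _ := t
  have : SeparatelyContinuousMul G :=
    .of_continuous_mul_mul fun a b => (hshift a b).continuous
  obtain ⟨p, q, hpq⟩ := exists_pair_ne α
  have hne : ∀ z : ({p, q}ᶜ : Set α), q ≠ z := fun z h => z.2 (by simp [← h])
  let f : ({p, q}ᶜ : Set α) → G := fun z =>
    ⟨swap p q * swap q z, hG (Perm.swap_mul_swap_mem_altGroup hpq (hne z))⟩
  have hf_inj : Injective f := fun z w h => Subtype.ext <| by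
    simpa [f] using congrArg (fun g : G => (g : Perm α) q) h
  refine ⟨range f, discreteTopology_range_swap_mul_swap hG fun _ => rfl, ?_⟩
  calc μ < #α := hμ
    _ = #({p, q}ᶜ : Set α) :=
      (mk_compl_of_infinite _ ((toFinite _).lt_aleph0.trans_le (aleph0_le_mk α))).symm
    _ = #(range f) := (mk_range_eq f hf_inj).symm
end
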